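/- For every x ∈ (0,∞), the Mina margin map M(x) = lim_{k→∞} M_{k,k}(x) satisfies M(1/x) = 1/M(x). -/

import Mathlib

/-- `ω(x) = √(8x+1)`. -/
noncomputable def wF (x : ℝ) : ℝ := Real.sqrt (8 * x + 1)

/-- `c(x) = (ω+3)²/16`. -/
noncomputable def cF (x : ℝ) : ℝ := (wF x + 3) ^ 2 / 16

/-- `d(x) = (ω+3)²/(8(ω+1))`. -/
noncomputable def dF (x : ℝ) : ℝ := (wF x + 3) ^ 2 / (8 * (wF x + 1))

/-- `s(x) = (ω−1)²/(4(ω+7))`. -/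
noncomputable def sF (x : ℝ) : ℝ := (wF x - 1) ^ 2 / (4 * (wF x + 7))

/-- `s₋₁(x) = 1/s(1/x)`, the inverse of `s`. -/
noncomputable def sFinv (x : ℝ) : ℝ := 1 / sF (1 / x)

/-- The ℤ-indexed iterates of `s`. -/
noncomputable def sIter (k : ℤ) (x : ℝ) : ℝ :=
  if 0 ≤ k then sF^[k.toNat] x else sFinv^[(-k).toNat] x

/-- `P₀ = 1` and `P_{k+1} − P_k = ∏_{i=0}^{k} (c_i(x) − 1)`. -/
noncomputable def Pfun (x : ℝ) : ℕ → ℝ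
  | 0 => 1
  | k + 1 => Pfun x k + ∏ i ∈ Finset.range (k + 1), (cF (sIter i x) - 1)

/-- `S₀ = 1` and `S_{k+1} − S_k = ∏_{i=0}^{k} (d_i(x) − 1)`. -/
noncomputable def Sfun (x : ℝ) : ℕ → ℝ
  | 0 => 1
  | k + 1 => Sfun x k + ∏ i ∈ Finset.range (k + 1), (dF (sIter i x) - 1)

/-- `Q₁ = 0` and `Q_{k+1} − Q_k = ∏_{i=1}^{k} (c_{−i}(x) − 1)⁻¹` for `k ≥ 1`. -/
noncomputable def Qfun (x : ℝ) : ℕ → ℝ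
  | 0 => 0
  | 1 => 0
  | k + 2 => Qfun x (k + 1) + ∏ i ∈ Finset.range (k + 1), (cF (sIter (-((i : ℤ) + 1)) x) - 1)⁻¹

/-- `T₁ = 0` and `T_{k+1} − T_k = ∏_{i=1}^{k} (d_{−i}(x) − 1)⁻¹` for `k ≥ 1`. -/
noncomputable def Tfun (x : ℝ) : ℕ → ℝ
  | 0 => 0
  | 1 => 0
  | k + 2 => Tfun x (k + 1) + ∏ i ∈ Finset.range (k + 1), (dF (sIter (-((i : ℤ) + 1)) x) - 1)⁻¹

/-- The finite-trail Mina margin map `M_{ℓ,k}(x) = x(S_k + T_ℓ)/(P_k + Q_ℓ)`. -/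
noncomputable def Mfin (l k : ℕ) (x : ℝ) : ℝ :=
  x * (Sfun x k + Tfun x l) / (Pfun x k + Qfun x l)

/-!
The substitution `x ↦ 1 / s(x)` exchanges the two kinds of factors: with `ω² = 8x + 1` one
checks `c(1/s(x)) − 1 = 1/(d(x) − 1)` and `d(1/s(x)) − 1 = 1/(c(x) − 1)`. Since
`s₋ᵢ₋₁(x) = 1/s(sᵢ(1/x))`, the forward factors at `1/x` are the reciprocals of the backward
factors at `x`, so `P_k(1/x) = 1 + T_{k+1}(x)` and `S_k(1/x) = 1 + Q_{k+1}(x)`, which gives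
`M_{k+1,k+1}(1/x) = 1/M_{k+2,k}(x)`. As `s(x) ≤ x/4`, the forward factors are at most
`4 sᵢ(x) → 0`, so `P` and `S` converge by the ratio test; hence so do `Q` and `T`, and
`M_{ℓ,k}(x)` has a positive limit as `ℓ, k → ∞` independently.
-/

open Filter Finset Topology

lemma wF_sq {x : ℝ} (hx : 0 < x) : wF x ^ 2 = 8 * x + 1 :=
  Real.sq_sqrt (by linarith)

lemma one_lt_wF {x : ℝ} (hx : 0 < x) : 1 < wF x := by
  rw [wF, Real.lt_sqrt zero_le_one]
  linarith

lemma sF_pos {x : ℝ} (hx : 0 < x) : 0 < sF x := by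
  have hw := one_lt_wF hx
  unfold sF
  positivity

lemma sF_le_div_four {x : ℝ} (hx : 0 < x) : sF x ≤ x / 4 := by
  have hw := one_lt_wF hx
  have hw2 := wF_sq hx
  rw [sF, div_le_div_iff₀ (by linarith) (by norm_num)]
  nlinarith

lemma cF_sub_one_pos {x : ℝ} (hx : 0 < x) : 0 < cF x - 1 := by
  have hw := one_lt_wF hx
  rw [cF]
  nlinarith

lemma dF_sub_one_pos {x : ℝ} (hx : 0 < x) : 0 < dF x - 1 := by
  have hw := one_lt_wF hx
  rw [dF, sub_pos, one_lt_div (by linarith)]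
  nlinarith

lemma cF_sub_one_le {x : ℝ} (hx : 0 < x) : cF x - 1 ≤ 4 * x := by
  have hw := one_lt_wF hx
  have hw2 := wF_sq hx
  rw [cF]
  nlinarith

lemma dF_sub_one_le {x : ℝ} (hx : 0 < x) : dF x - 1 ≤ 4 * x := by
  have hw := one_lt_wF hx
  have hw2 := wF_sq hx
  rw [dF, sub_le_iff_le_add, div_le_iff₀ (by linarith)]
  nlinarith

lemma wF_one_div_sF {x : ℝ} (hx : 0 < x) : wF (1 / sF x) = (wF x + 15) / (wF x - 1) := by
  have hw := one_lt_wF hx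
  have hsq : 8 * (1 / sF x) + 1 = ((wF x + 15) / (wF x - 1)) ^ 2 := by
    have : wF x - 1 ≠ 0 := by linarith
    have : wF x + 7 ≠ 0 := by linarith
    rw [sF]
    field_simp
    ring
  rw [wF, hsq, Real.sqrt_sq (div_nonneg (by linarith) (by linarith))]

lemma cF_one_div_sF {x : ℝ} (hx : 0 < x) : cF (1 / sF x) - 1 = (dF x - 1)⁻¹ := by
  have hw := one_lt_wF hx
  have : wF x - 1 ≠ 0 := by linarith
  have : wF x + 1 ≠ 0 := by linarith
  refine eq_inv_of_mul_eq_one_right ?_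
  rw [cF, wF_one_div_sF hx, dF]
  field_simp
  ring

lemma dF_one_div_sF {x : ℝ} (hx : 0 < x) : dF (1 / sF x) - 1 = (cF x - 1)⁻¹ := by
  have hw := one_lt_wF hx
  have : wF x - 1 ≠ 0 := by linarith
  have : wF x + 1 ≠ 0 := by linarith
  have : wF x + 7 ≠ 0 := by linarith
  have hnum : (wF x + 15) / (wF x - 1) + 3 = 4 * (wF x + 3) / (wF x - 1) := by
    field_simp; ring
  have hden : 8 * ((wF x + 15) / (wF x - 1) + 1) = 16 * (wF x + 7) / (wF x - 1) := by
    field_simp; ring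
  refine eq_inv_of_mul_eq_one_right ?_
  rw [dF, wF_one_div_sF hx, hnum, hden, cF]
  field_simp
  ring

lemma sFinv_iterate (n : ℕ) (x : ℝ) : sFinv^[n] x = 1 / sF^[n] (1 / x) := by
  have hconj : Function.Semiconj (fun y : ℝ => 1 / y) sFinv sF := fun y => by
    simp only [sFinv, one_div_one_div]
  rw [← hconj.iterate_right n, one_div_one_div]

lemma sIter_natCast (n : ℕ) (x : ℝ) : sIter n x = sF^[n] x := by
  simp [sIter]

lemma sIter_neg_succ (n : ℕ) (x : ℝ) : sIter (-((n : ℤ) + 1)) x = 1 / sF (sIter n (1 / x)) := by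
  have hn : (-(-((n : ℤ) + 1))).toNat = n + 1 := by omega
  rw [sIter, if_neg (by omega), hn, sIter_natCast, sFinv_iterate, Function.iterate_succ_apply']

lemma sIter_natCast_pos {x : ℝ} (hx : 0 < x) (n : ℕ) : 0 < sIter n x := by
  rw [sIter_natCast]
  induction n with
  | zero => exact hx
  | succ n ih => rw [Function.iterate_succ_apply']; exact sF_pos ih

lemma tendsto_sIter_natCast {x : ℝ} (hx : 0 < x) :
    Tendsto (fun n : ℕ => sIter n x) atTop (𝓝 0) := by
  have hle : ∀ n : ℕ, sIter n x ≤ x * (1 / 4) ^ n := by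
    intro n
    induction n with
    | zero => simp [sIter]
    | succ n ih =>
      rw [sIter_natCast, Function.iterate_succ_apply', ← sIter_natCast]
      calc sF (sIter n x) ≤ sIter n x / 4 := sF_le_div_four (sIter_natCast_pos hx n)
        _ ≤ x * (1 / 4) ^ (n + 1) := by rw [pow_succ]; linarith
  have hgeom : Tendsto (fun n : ℕ => x * (1 / 4 : ℝ) ^ n) atTop (𝓝 0) := by
    simpa using (tendsto_pow_atTop_nhds_zero_of_lt_one (r := (1 / 4 : ℝ)) (by norm_num) (by norm_num)).const_mul x
  exact squeeze_zero (fun n => (sIter_natCast_pos hx n).le) hle hgeom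

lemma cF_sIter_one_div {x : ℝ} (hx : 0 < x) (n : ℕ) :
    cF (sIter n (1 / x)) - 1 = (dF (sIter (-((n : ℤ) + 1)) x) - 1)⁻¹ := by
  rw [sIter_neg_succ, dF_one_div_sF (sIter_natCast_pos (one_div_pos.2 hx) n), inv_inv]

lemma dF_sIter_one_div {x : ℝ} (hx : 0 < x) (n : ℕ) :
    dF (sIter n (1 / x)) - 1 = (cF (sIter (-((n : ℤ) + 1)) x) - 1)⁻¹ := by
  rw [sIter_neg_succ, cF_one_div_sF (sIter_natCast_pos (one_div_pos.2 hx) n), inv_inv]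

lemma Pfun_one_div {x : ℝ} (hx : 0 < x) (k : ℕ) : Pfun (1 / x) k = 1 + Tfun x (k + 1) := by
  induction k with
  | zero => simp [Pfun, Tfun]
  | succ k ih =>
    rw [Pfun, ih, Tfun]
    simp only [cF_sIter_one_div hx]
    ring

lemma Sfun_one_div {x : ℝ} (hx : 0 < x) (k : ℕ) : Sfun (1 / x) k = 1 + Qfun x (k + 1) := by
  induction k with
  | zero => simp [Sfun, Qfun]
  | succ k ih =>
    rw [Sfun, ih, Qfun]
    simp only [dF_sIter_one_div hx]
    ring

lemma Mfin_one_div {x : ℝ} (hx : 0 < x) (k : ℕ) :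
    Mfin (k + 1) (k + 1) (1 / x) = (Mfin (k + 2) k x)⁻¹ := by
  have hT : Tfun (1 / x) (k + 1) = Pfun x k - 1 := by
    have := Pfun_one_div (one_div_pos.2 hx) k
    rw [one_div_one_div] at this
    linarith
  have hQ : Qfun (1 / x) (k + 1) = Sfun x k - 1 := by
    have := Sfun_one_div (one_div_pos.2 hx) k
    rw [one_div_one_div] at this
    linarith
  rw [Mfin, Mfin, Pfun_one_div hx, Sfun_one_div hx, hT, hQ]
  simp only [div_eq_mul_inv, mul_inv, inv_inv, one_mul]
  ring

lemma exists_tendsto_of_succ_eq_add_prod {f a : ℕ → ℝ}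
    (hf : ∀ k, f (k + 1) = f k + ∏ i ∈ range (k + 1), a i)
    (ha : ∀ i, 0 ≤ a i) (ha0 : Tendsto a atTop (𝓝 0)) :
    ∃ l, f 0 ≤ l ∧ Tendsto f atTop (𝓝 l) := by
  set t : ℕ → ℝ := fun j => ∏ i ∈ range (j + 1), a i
  have ht : ∀ j, 0 ≤ t j := fun j => prod_nonneg fun i _ => ha i
  have hsum : Summable t := by
    refine summable_of_ratio_norm_eventually_le (r := 1 / 2) (by norm_num) ?_
    filter_upwards [(tendsto_add_atTop_nat 1).eventually
      (ha0.eventually_lt_const (by norm_num : (0 : ℝ) < 1 / 2))] with j hj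
    rw [Real.norm_of_nonneg (ht _), Real.norm_of_nonneg (ht _),
      show t (j + 1) = t j * a (j + 1) from prod_range_succ _ _, mul_comm (1 / 2)]
    exact mul_le_mul_of_nonneg_left hj.le (ht j)
  have hf_sum : ∀ k, f 0 + ∑ j ∈ range k, t j = f k := by
    intro k
    induction k with
    | zero => simp
    | succ k ih => rw [hf, ← ih, sum_range_succ, add_assoc]
  refine ⟨f 0 + ∑' j, t j, le_add_of_nonneg_right (tsum_nonneg ht), ?_⟩
  exact (tendsto_const_nhds.add hsum.hasSum.tendsto_sum_nat).congr hf_sum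

lemma exists_tendsto_Pfun {x : ℝ} (hx : 0 < x) :
    ∃ A, 1 ≤ A ∧ Tendsto (Pfun x) atTop (𝓝 A) := by
  refine exists_tendsto_of_succ_eq_add_prod (f := Pfun x) (fun k => rfl)
    (fun i => (cF_sub_one_pos (sIter_natCast_pos hx i)).le) ?_
  refine squeeze_zero (fun i => (cF_sub_one_pos (sIter_natCast_pos hx i)).le)
    (fun i => cF_sub_one_le (sIter_natCast_pos hx i)) ?_
  simpa using (tendsto_sIter_natCast hx).const_mul 4

lemma exists_tendsto_Sfun {x : ℝ} (hx : 0 < x) :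
    ∃ B, 1 ≤ B ∧ Tendsto (Sfun x) atTop (𝓝 B) := by
  refine exists_tendsto_of_succ_eq_add_prod (f := Sfun x) (fun k => rfl)
    (fun i => (dF_sub_one_pos (sIter_natCast_pos hx i)).le) ?_
  refine squeeze_zero (fun i => (dF_sub_one_pos (sIter_natCast_pos hx i)).le)
    (fun i => dF_sub_one_le (sIter_natCast_pos hx i)) ?_
  simpa using (tendsto_sIter_natCast hx).const_mul 4

lemma exists_tendsto_Mfin {x : ℝ} (hx : 0 < x) :
    ∃ L, 0 < L ∧ Tendsto (fun p : ℕ × ℕ => Mfin p.1 p.2 x) (atTop ×ˢ atTop) (𝓝 L) := by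
  obtain ⟨A, hA, hP⟩ := exists_tendsto_Pfun hx
  obtain ⟨B, hB, hS⟩ := exists_tendsto_Sfun hx
  obtain ⟨C, hC, hS'⟩ := exists_tendsto_Sfun (one_div_pos.2 hx)
  obtain ⟨D, hD, hP'⟩ := exists_tendsto_Pfun (one_div_pos.2 hx)
  have hQ : Tendsto (Qfun x) atTop (𝓝 (C - 1)) := by
    refine (tendsto_add_atTop_iff_nat 1).mp ((hS'.sub_const 1).congr fun k => ?_)
    linarith [Sfun_one_div hx k]
  have hT : Tendsto (Tfun x) atTop (𝓝 (D - 1)) := by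
    refine (tendsto_add_atTop_iff_nat 1).mp ((hP'.sub_const 1).congr fun k => ?_)
    linarith [Pfun_one_div hx k]
  refine ⟨x * (B + (D - 1)) / (A + (C - 1)), by apply div_pos <;> nlinarith, ?_⟩
  exact (tendsto_const_nhds.mul ((hS.comp tendsto_snd).add (hT.comp tendsto_fst))).div
    ((hP.comp tendsto_snd).add (hQ.comp tendsto_fst)) (by linarith)

/-- The Mina margin map satisfies `M(1/x) = 1/M(x)`: for every `x > 0` there is a
positive real `L` with `M_{k,k}(x) → L` and `M_{k,k}(1/x) → L⁻¹` as `k → ∞`. -/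
theorem mina_margin_reciprocal (x : ℝ) (hx : 0 < x) :
    ∃ L : ℝ, 0 < L ∧
      Filter.Tendsto (fun k : ℕ => Mfin k k x) Filter.atTop (nhds L) ∧
      Filter.Tendsto (fun k : ℕ => Mfin k k (1 / x)) Filter.atTop (nhds L⁻¹) := by
  obtain ⟨L, hL, hM⟩ := exists_tendsto_Mfin hx
  refine ⟨L, hL, hM.comp (tendsto_id.prodMk tendsto_id), ?_⟩
  have hshift : Tendsto (fun k : ℕ => (Mfin (k + 2) k x)⁻¹) atTop (𝓝 L⁻¹) :=
    (hM.comp ((tendsto_add_atTop_nat 2).prodMk tendsto_id)).inv₀ hL.ne'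
  refine (tendsto_add_atTop_iff_nat 1).mp ?_
  simpa only [Mfin_one_div hx] using hshift
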